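/- arXiv:2301.00176 — 2 statements merged into one kernel-verified Lean document; each statement's English description precedes it below -/
import Mathlib

section
/- Let A be a real m×n matrix with no zero row and let b ∈ ℝ^m. Consider the RKAS iteration: starting from x⁰ = 0, at step k a row index i_k ∈ {1,…,m} is drawn independently with probability ‖A_{i_k,:}‖₂²/‖A‖_F², and x^{k+1} = x^k − α_k A_{i_k,:}ᵀ with α_k = ⟨A A_{i_k,:}ᵀ, A x^k − b⟩ / ‖A A_{i_k,:}ᵀ‖₂². Then for every k ≥ 0, E[‖A x^k − A x̄‖₂²] ≤ (1 − σ_min(A)⁴/(‖A‖₂² ‖A‖_F²))^k · ‖A x⁰ − A x̄‖₂², where the expectation is over the i.i.d. index sequence, i.e. E[g(x^k)] = ∑_{(i_0,…,i_{k−1}) ∈ [m]^k} (∏_{j<k} ‖A_{i_j,:}‖₂²/‖A‖_F²) · g(x^k(i_0,…,i_{k−1})). -/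
open Matrix
open scoped RealInnerProductSpace

/-- `mulE A x` is the matrix-vector product `A x`, viewed as a map between
Euclidean spaces (so that `‖·‖` is the Euclidean norm and `⟪·,·⟫` the dot product). -/
noncomputable def mulE {m n : ℕ} (A : Matrix (Fin m) (Fin n) ℝ)
    (x : EuclideanSpace ℝ (Fin n)) : EuclideanSpace ℝ (Fin m) :=
  Matrix.toEuclideanLin A x

/-- `rowE A i` is the `i`-th row of `A` (i.e. the vector `A_{i,:}ᵀ`),
viewed as an element of Euclidean space. -/
noncomputable def rowE {m n : ℕ} (A : Matrix (Fin m) (Fin n) ℝ) (i : Fin m) :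
    EuclideanSpace ℝ (Fin n) :=
  (EuclideanSpace.equiv (Fin n) ℝ).symm (A i)

/-- One step of the RKAS method: `x⁺ = x − α A_{i,:}ᵀ` with the adaptive
stepsize `α = ⟨A A_{i,:}ᵀ, A x − b⟩ / ‖A A_{i,:}ᵀ‖²`. -/
noncomputable def rkasStep {m n : ℕ} (A : Matrix (Fin m) (Fin n) ℝ)
    (b : EuclideanSpace ℝ (Fin m)) (x : EuclideanSpace ℝ (Fin n)) (i : Fin m) :
    EuclideanSpace ℝ (Fin n) :=
  x - (⟪mulE A (rowE A i), mulE A x - b⟫ / ‖mulE A (rowE A i)‖ ^ 2) • rowE A i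

/-- `frobSq A = ‖A‖_F²`, the squared Frobenius norm of `A`. -/
noncomputable def frobSq {m n : ℕ} (A : Matrix (Fin m) (Fin n) ℝ) : ℝ :=
  ∑ i, ∑ j, A i j ^ 2

/-- `rkasSeq A b x0 k s` is the RKAS iterate `x^k` obtained from the initial
point `x0` using the row indices `s = (i_0, …, i_{k-1}) ∈ [m]^k`. -/
noncomputable def rkasSeq {m n : ℕ} (A : Matrix (Fin m) (Fin n) ℝ)
    (b : EuclideanSpace ℝ (Fin m)) (x0 : EuclideanSpace ℝ (Fin n)) :
    (k : ℕ) → (Fin k → Fin m) → EuclideanSpace ℝ (Fin n)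
  | 0, _ => x0
  | k + 1, s => rkasStep A b (rkasSeq A b x0 k fun j => s j.castSucc) (s (Fin.last k))

section aux
variable {m n : ℕ} (A : Matrix (Fin m) (Fin n) ℝ)

lemma mulE_apply (x : EuclideanSpace ℝ (Fin n)) (i : Fin m) :
    mulE A x i = ∑ j, A i j * x j := rfl

lemma rowE_apply (i : Fin m) (j : Fin n) : rowE A i j = A i j := rfl

lemma inner_EE (x y : EuclideanSpace ℝ (Fin n)) : ⟪x, y⟫ = ∑ j, x j * y j := by
  rw [PiLp.inner_apply]
  exact Finset.sum_congr rfl fun j _ => by simp only [RCLike.inner_apply, conj_trivial]; ring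

lemma mulE_sub (x y : EuclideanSpace ℝ (Fin n)) :
    mulE A (x - y) = mulE A x - mulE A y := map_sub (Matrix.toEuclideanLin A) x y

lemma mulE_smul (c : ℝ) (x : EuclideanSpace ℝ (Fin n)) :
    mulE A (c • x) = c • mulE A x := map_smul (Matrix.toEuclideanLin A) c x

lemma mulE_zero : mulE A (0 : EuclideanSpace ℝ (Fin n)) = 0 :=
  map_zero (Matrix.toEuclideanLin A)

lemma inner_mulE (u : EuclideanSpace ℝ (Fin n)) (v : EuclideanSpace ℝ (Fin m)) :
    ⟪mulE A u, v⟫ = ⟪u, mulE Aᵀ v⟫ := by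
  simp only [inner_EE, mulE_apply, Finset.sum_mul, Finset.mul_sum, transpose_apply]
  rw [Finset.sum_comm]
  exact Finset.sum_congr rfl fun j _ => Finset.sum_congr rfl fun i _ => by ring

lemma rowE_mem (i : Fin m) : rowE A i ∈ Set.range (mulE Aᵀ) := by
  refine ⟨EuclideanSpace.single i 1, ?_⟩
  ext j
  rw [mulE_apply]
  rw [Finset.sum_eq_single i] <;>
    simp +contextual [EuclideanSpace.single_apply, rowE_apply]

lemma inner_rowE (i : Fin m) (z : EuclideanSpace ℝ (Fin n)) :
    ⟪rowE A i, z⟫ = mulE A z i := by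
  rw [inner_EE, mulE_apply]
  exact Finset.sum_congr rfl fun j _ => rfl

lemma norm_sq_E (x : EuclideanSpace ℝ (Fin m)) : ‖x‖ ^ 2 = ∑ i, x i ^ 2 := by
  rw [← real_inner_self_eq_norm_sq, inner_EE]
  exact Finset.sum_congr rfl fun i _ => (sq (x i)).symm

lemma norm_rowE_sq (i : Fin m) : ‖rowE A i‖ ^ 2 = ∑ j, A i j ^ 2 := by
  rw [norm_sq_E]; rfl

lemma frobSq_eq : frobSq A = ∑ i, ‖rowE A i‖ ^ 2 := by
  unfold frobSq
  exact Finset.sum_congr rfl fun i _ => (norm_rowE_sq A i).symm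

lemma norm_mulE_sq (z : EuclideanSpace ℝ (Fin n)) :
    ‖mulE A z‖ ^ 2 = ∑ i, ⟪rowE A i, z⟫ ^ 2 := by
  rw [norm_sq_E]
  exact Finset.sum_congr rfl fun i _ => by rw [inner_rowE]

end aux

section main
variable {m n : ℕ} {A : Matrix (Fin m) (Fin n) ℝ}

-- With nonzero rows and m > 0, frobSq > 0
lemma frobSq_pos (hrows : ∀ i, A i ≠ 0) (hm : 0 < m) : 0 < frobSq A := by
  rw [frobSq_eq]
  apply Finset.sum_pos
  · intro i _
    have : rowE A i ≠ 0 := by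
      intro h; apply hrows i; funext j
      have := congrArg (fun v => v j) h; simpa [rowE_apply] using this
    exact pow_pos (norm_pos_iff.mpr this) 2
  · exact ⟨⟨0, hm⟩, Finset.mem_univ _⟩


theorem rkas_key_step
    (hrows : ∀ i, A i ≠ 0) (hm : 0 < m)
    (b : EuclideanSpace ℝ (Fin m))
    (xbar : EuclideanSpace ℝ (Fin n))
    (hxbar_normal : mulE Aᵀ (mulE A xbar) = mulE Aᵀ b)
    (σmin : ℝ) (hσ_pos : 0 < σmin)
    (hσ_lb : ∀ z ∈ Set.range (mulE Aᵀ), σmin * ‖z‖ ≤ ‖mulE A z‖)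
    (nA : ℝ) (hnA_pos : 0 < nA) (hnA_ub : ∀ z, ‖mulE A z‖ ≤ nA * ‖z‖)
    (x : EuclideanSpace ℝ (Fin n)) (hw : x - xbar ∈ Set.range (mulE Aᵀ)) :
    ∑ i, (‖rowE A i‖ ^ 2 / frobSq A) * ‖mulE A (rkasStep A b x i) - mulE A xbar‖ ^ 2
      ≤ (1 - σmin ^ 4 / (nA ^ 2 * frobSq A)) * ‖mulE A x - mulE A xbar‖ ^ 2 := by
  have hFpos : 0 < frobSq A := frobSq_pos hrows hm
  set F := frobSq A with hF
  set r : EuclideanSpace ℝ (Fin m) := mulE A x - mulE A xbar with hr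
  have hrowne : ∀ i, rowE A i ≠ 0 := by
    intro i h; apply hrows i; funext j
    have := congrArg (fun v => v j) h; simpa [rowE_apply] using this
  have hgpos : ∀ i, 0 < ‖mulE A (rowE A i)‖ := by
    intro i
    have h1 := hσ_lb (rowE A i) (rowE_mem A i)
    have h2 : 0 < ‖rowE A i‖ := norm_pos_iff.mpr (hrowne i)
    calc (0:ℝ) < σmin * ‖rowE A i‖ := by positivity
    _ ≤ _ := h1
  -- step residual formula
  have hresid : ∀ i, mulE A (rkasStep A b x i) - mulE A xbar
      = r - (⟪mulE A (rowE A i), r⟫ / ‖mulE A (rowE A i)‖ ^ 2) • mulE A (rowE A i) := by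
    intro i
    have hzero : ⟪mulE A (rowE A i), mulE A xbar - b⟫ = 0 := by
      rw [inner_mulE, mulE_sub Aᵀ, hxbar_normal, sub_self]
      exact inner_zero_right _
    have hcc : ⟪mulE A (rowE A i), mulE A x - b⟫ = ⟪mulE A (rowE A i), r⟫ := by
      have hsp : mulE A x - b = r + (mulE A xbar - b) := by rw [hr]; abel
      rw [hsp, inner_add_right, hzero, add_zero]
    rw [rkasStep, mulE_sub A, mulE_smul A, hcc, hr]
    abel
  -- projection norm identity
  have hproj : ∀ i, ‖r - (⟪mulE A (rowE A i), r⟫ / ‖mulE A (rowE A i)‖ ^ 2) • mulE A (rowE A i)‖ ^ 2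
      = ‖r‖ ^ 2 - ⟪mulE A (rowE A i), r⟫ ^ 2 / ‖mulE A (rowE A i)‖ ^ 2 := by
    intro i
    have hgn : ‖mulE A (rowE A i)‖ ≠ 0 := ne_of_gt (hgpos i)
    rw [norm_sub_sq_real, real_inner_smul_right, norm_smul, real_inner_comm]
    rw [Real.norm_eq_abs, mul_pow, sq_abs]
    field_simp
    ring
  -- sum of probabilities = 1
  have hsump : ∑ i, ‖rowE A i‖ ^ 2 / F = 1 := by
    rw [← Finset.sum_div, ← frobSq_eq, div_self (ne_of_gt hFpos)]
  -- lower bound on ∑ c i ^ 2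
  have hsumc : σmin ^ 4 * ‖r‖ ^ 2 ≤ ∑ i, ⟪mulE A (rowE A i), r⟫ ^ 2 := by
    have hcAAt : ∀ i, ⟪mulE A (rowE A i), r⟫ = mulE A (mulE Aᵀ r) i := by
      intro i; rw [inner_mulE, inner_rowE]
    have h1 : ∑ i, ⟪mulE A (rowE A i), r⟫ ^ 2 = ‖mulE A (mulE Aᵀ r)‖ ^ 2 := by
      rw [norm_sq_E]
      exact Finset.sum_congr rfl fun i _ => by rw [hcAAt i]
    have h2 : σmin * ‖mulE Aᵀ r‖ ≤ ‖mulE A (mulE Aᵀ r)‖ :=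
      hσ_lb _ ⟨r, rfl⟩
    obtain ⟨u, hu⟩ := hw
    have hru : r = mulE A (mulE Aᵀ u) := by rw [hr, ← mulE_sub, ← hu]
    have h3 : σmin * ‖r‖ ≤ ‖mulE Aᵀ r‖ := by
      rcases eq_or_ne r 0 with h | h
      · simp [h]
      have hrpos : 0 < ‖r‖ := norm_pos_iff.mpr h
      have hw2 : σmin * ‖mulE Aᵀ u‖ ≤ ‖r‖ := by
        rw [hru]; exact hσ_lb _ ⟨u, rfl⟩
      have hcs : ‖r‖ ^ 2 ≤ ‖mulE Aᵀ r‖ * ‖mulE Aᵀ u‖ := by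
        have he : (‖r‖:ℝ) ^ 2 = ⟪mulE Aᵀ r, mulE Aᵀ u⟫ := by
          rw [inner_mulE Aᵀ, transpose_transpose, ← hru, real_inner_self_eq_norm_sq]
        rw [he]
        exact real_inner_le_norm _ _
      nlinarith [norm_nonneg (mulE Aᵀ r), norm_nonneg (mulE Aᵀ u)]
    rw [h1]
    have h5 : σmin ^ 2 * ‖r‖ ≤ ‖mulE A (mulE Aᵀ r)‖ := by nlinarith [norm_nonneg r]
    calc σmin ^ 4 * ‖r‖ ^ 2 = (σmin ^ 2 * ‖r‖) ^ 2 := by ring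
      _ ≤ ‖mulE A (mulE Aᵀ r)‖ ^ 2 := by
          apply pow_le_pow_left₀ (by positivity) h5
  -- per-term lower bound for subtracted quantity
  have hterm : ∀ i, ⟪mulE A (rowE A i), r⟫ ^ 2 / (nA ^ 2 * F)
      ≤ (‖rowE A i‖ ^ 2 / F) * (⟪mulE A (rowE A i), r⟫ ^ 2 / ‖mulE A (rowE A i)‖ ^ 2) := by
    intro i
    have hrowpos : 0 < ‖rowE A i‖ := norm_pos_iff.mpr (hrowne i)
    have hgub : ‖mulE A (rowE A i)‖ ^ 2 ≤ nA ^ 2 * ‖rowE A i‖ ^ 2 := by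
      have := hnA_ub (rowE A i)
      nlinarith [norm_nonneg (mulE A (rowE A i)), norm_nonneg (rowE A i)]
    have key : ⟪mulE A (rowE A i), r⟫ ^ 2 * (‖rowE A i‖ ^ 2 * ‖mulE A (rowE A i)‖ ^ 2)
        ≤ ⟪mulE A (rowE A i), r⟫ ^ 2 * (‖rowE A i‖ ^ 2 * (nA ^ 2 * ‖rowE A i‖ ^ 2)) := by
      apply mul_le_mul_of_nonneg_left _ (sq_nonneg _)
      exact mul_le_mul_of_nonneg_left hgub (sq_nonneg _)
    rw [div_mul_div_comm, div_le_div_iff₀ (mul_pos (pow_pos hnA_pos 2) hFpos) (mul_pos hFpos (pow_pos (hgpos i) 2))]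
    calc ⟪mulE A (rowE A i), r⟫ ^ 2 * (F * ‖mulE A (rowE A i)‖ ^ 2)
        ≤ ⟪mulE A (rowE A i), r⟫ ^ 2 * (F * (nA ^ 2 * ‖rowE A i‖ ^ 2)) := by
          apply mul_le_mul_of_nonneg_left _ (sq_nonneg _)
          exact mul_le_mul_of_nonneg_left hgub (le_of_lt hFpos)
      _ = ‖rowE A i‖ ^ 2 * ⟪mulE A (rowE A i), r⟫ ^ 2 * (nA ^ 2 * F) := by ring
  -- combine
  calc ∑ i, (‖rowE A i‖ ^ 2 / F) * ‖mulE A (rkasStep A b x i) - mulE A xbar‖ ^ 2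
      = ∑ i, (‖rowE A i‖ ^ 2 / F) * (‖r‖ ^ 2 - ⟪mulE A (rowE A i), r⟫ ^ 2 / ‖mulE A (rowE A i)‖ ^ 2) := by
        refine Finset.sum_congr rfl fun i _ => ?_
        rw [hresid i, hproj i]
    _ = ‖r‖ ^ 2 - ∑ i, (‖rowE A i‖ ^ 2 / F) * (⟪mulE A (rowE A i), r⟫ ^ 2 / ‖mulE A (rowE A i)‖ ^ 2) := by
        simp only [mul_sub]
        rw [Finset.sum_sub_distrib, ← Finset.sum_mul, hsump, one_mul]
    _ ≤ ‖r‖ ^ 2 - ∑ i, ⟪mulE A (rowE A i), r⟫ ^ 2 / (nA ^ 2 * F) := by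
        apply sub_le_sub_left
        exact Finset.sum_le_sum fun i _ => hterm i
    _ = ‖r‖ ^ 2 - (∑ i, ⟪mulE A (rowE A i), r⟫ ^ 2) / (nA ^ 2 * F) := by
        rw [Finset.sum_div]
    _ ≤ ‖r‖ ^ 2 - σmin ^ 4 * ‖r‖ ^ 2 / (nA ^ 2 * F) := by
        apply sub_le_sub_left
        gcongr
    _ = (1 - σmin ^ 4 / (nA ^ 2 * F)) * ‖r‖ ^ 2 := by ring


end main

section main2
variable {m n : ℕ} {A : Matrix (Fin m) (Fin n) ℝ}

lemma range_sub {x y : EuclideanSpace ℝ (Fin n)}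
    (hx : x ∈ Set.range (mulE Aᵀ)) (hy : y ∈ Set.range (mulE Aᵀ)) :
    x - y ∈ Set.range (mulE Aᵀ) := by
  obtain ⟨u, hu⟩ := hx; obtain ⟨v, hv⟩ := hy
  exact ⟨u - v, by rw [mulE_sub, hu, hv]⟩

lemma rkasStep_mem (b : EuclideanSpace ℝ (Fin m)) {x : EuclideanSpace ℝ (Fin n)}
    (hx : x ∈ Set.range (mulE Aᵀ)) (i : Fin m) :
    rkasStep A b x i ∈ Set.range (mulE Aᵀ) := by
  obtain ⟨u, hu⟩ := hx
  obtain ⟨v, hv⟩ := rowE_mem A i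
  refine ⟨u - (⟪mulE A (rowE A i), mulE A x - b⟫ / ‖mulE A (rowE A i)‖ ^ 2) • v, ?_⟩
  rw [rkasStep, mulE_sub, mulE_smul Aᵀ, hu, hv]

lemma rkasSeq_mem (b : EuclideanSpace ℝ (Fin m)) (k : ℕ) (s : Fin k → Fin m) :
    rkasSeq A b 0 k s ∈ Set.range (mulE Aᵀ) := by
  induction k with
  | zero => exact ⟨0, (mulE_zero Aᵀ).trans rfl⟩
  | succ k ih => exact rkasStep_mem b (ih _) _

/-- Theorem 3.1: for the RKAS method started at `x⁰ = 0`, with row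
`i` drawn with probability `‖A_{i,:}‖²/‖A‖_F²` at each step,
`E[‖A x^k − A x̄‖²] ≤ (1 − σ_min(A)⁴/(‖A‖₂² ‖A‖_F²))^k ‖A x⁰ − A x̄‖²`,
where the expectation is the sum over all index tuples `(i_0,…,i_{k-1}) ∈ [m]^k`
weighted by their probabilities. -/
theorem rkas_residual_convergence (m n : ℕ) (A : Matrix (Fin m) (Fin n) ℝ)
    (hA : A ≠ 0) (hrows : ∀ i, A i ≠ 0)
    (b : EuclideanSpace ℝ (Fin m))
    -- `x̄ = A†b`: the unique vector in `Range(Aᵀ)` satisfying `Aᵀ A x̄ = Aᵀ b`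
    (xbar : EuclideanSpace ℝ (Fin n))
    (hxbar_mem : xbar ∈ Set.range (mulE Aᵀ))
    (hxbar_normal : mulE Aᵀ (mulE A xbar) = mulE Aᵀ b)
    -- `σ_min(A)`: the smallest nonzero singular value of `A`
    (σmin : ℝ) (hσ_pos : 0 < σmin)
    (hσ_lb : ∀ z ∈ Set.range (mulE Aᵀ), σmin * ‖z‖ ≤ ‖mulE A z‖)
    (hσ_att : ∃ z ∈ Set.range (mulE Aᵀ), z ≠ 0 ∧ ‖mulE A z‖ = σmin * ‖z‖)
    -- `nA = ‖A‖₂`: the spectral norm of `A`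
    (nA : ℝ) (hnA_ub : ∀ z, ‖mulE A z‖ ≤ nA * ‖z‖)
    (hnA_att : ∃ z : EuclideanSpace ℝ (Fin n), z ≠ 0 ∧ ‖mulE A z‖ = nA * ‖z‖)
    (k : ℕ) :
    ∑ s : Fin k → Fin m,
        (∏ j, ‖rowE A (s j)‖ ^ 2 / frobSq A) *
          ‖mulE A (rkasSeq A b 0 k s) - mulE A xbar‖ ^ 2
      ≤ (1 - σmin ^ 4 / (nA ^ 2 * frobSq A)) ^ k *
          ‖mulE A 0 - mulE A xbar‖ ^ 2 := by
  have hm : 0 < m := by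
    rcases Nat.eq_zero_or_pos m with h | h
    · exfalso; apply hA; subst h; ext i j; exact i.elim0
    · exact h
  have hFpos : 0 < frobSq A := frobSq_pos hrows hm
  -- nA ≥ σmin > 0
  have hnA_pos : 0 < nA := by
    obtain ⟨z, _, hz_ne, hz_eq⟩ := hσ_att
    have hzpos : 0 < ‖z‖ := norm_pos_iff.mpr hz_ne
    have h1 : σmin * ‖z‖ ≤ nA * ‖z‖ := hz_eq ▸ hnA_ub z
    nlinarith
  have hσ_le_nA : σmin ≤ nA := by
    obtain ⟨z, _, hz_ne, hz_eq⟩ := hσ_att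
    have hzpos : 0 < ‖z‖ := norm_pos_iff.mpr hz_ne
    have h1 : σmin * ‖z‖ ≤ nA * ‖z‖ := hz_eq ▸ hnA_ub z
    exact le_of_mul_le_mul_right h1 hzpos
  -- nA^2 ≤ frobSq A
  have hnA_sq_le : nA ^ 2 ≤ frobSq A := by
    obtain ⟨z, hz_ne, hz_eq⟩ := hnA_att
    have hzpos : 0 < ‖z‖ := norm_pos_iff.mpr hz_ne
    have h1 : ‖mulE A z‖ ^ 2 ≤ frobSq A * ‖z‖ ^ 2 := by
      rw [norm_mulE_sq, frobSq_eq, Finset.sum_mul]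
      refine Finset.sum_le_sum fun i _ => ?_
      have := abs_real_inner_le_norm (rowE A i) z
      calc ⟪rowE A i, z⟫ ^ 2 = |⟪rowE A i, z⟫| ^ 2 := (sq_abs _).symm
        _ ≤ (‖rowE A i‖ * ‖z‖) ^ 2 := by
            apply pow_le_pow_left₀ (abs_nonneg _) this
        _ = ‖rowE A i‖ ^ 2 * ‖z‖ ^ 2 := by ring
    rw [hz_eq] at h1
    have h1' : nA ^ 2 * ‖z‖ ^ 2 ≤ frobSq A * ‖z‖ ^ 2 := by nlinarith
    exact le_of_mul_le_mul_right h1' (pow_pos hzpos 2)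
  have hq_nonneg : 0 ≤ 1 - σmin ^ 4 / (nA ^ 2 * frobSq A) := by
    have hs2 : σmin ^ 2 ≤ nA ^ 2 := by nlinarith
    have hs2' : σmin ^ 2 ≤ frobSq A := le_trans hs2 hnA_sq_le
    have h1 : σmin ^ 4 ≤ nA ^ 2 * frobSq A := by
      nlinarith [mul_le_mul hs2 hs2' (sq_nonneg σmin) (sq_nonneg nA)]
    have h2 : σmin ^ 4 / (nA ^ 2 * frobSq A) ≤ 1 := by
      rw [div_le_one (by positivity)]; exact h1
    linarith
  induction k with
  | zero =>
    have h0 : rkasSeq A b (0 : EuclideanSpace ℝ (Fin n)) 0 (fun j => j.elim0) = 0 := rfl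
    rw [Fintype.sum_subsingleton _ (fun j : Fin 0 => j.elim0), h0, Fin.prod_univ_zero,
      pow_zero, one_mul]
  | succ k ih =>
    set q := 1 - σmin ^ 4 / (nA ^ 2 * frobSq A) with hqdef
    -- reindex the sum over Fin (k+1) → Fin m via snoc
    rw [← Equiv.sum_comp (Fin.snocEquiv (fun _ : Fin (k+1) => Fin m))]
    rw [Fintype.sum_prod_type]
    -- swap to sum over tails first
    rw [Finset.sum_comm]
    have hstep : ∀ t : Fin k → Fin m,
        ∑ i : Fin m, (∏ j, ‖rowE A ((Fin.snocEquiv (fun _ : Fin (k+1) => Fin m)) (i, t) j)‖ ^ 2 / frobSq A) *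
          ‖mulE A (rkasSeq A b 0 (k+1) ((Fin.snocEquiv (fun _ : Fin (k+1) => Fin m)) (i, t))) - mulE A xbar‖ ^ 2
        ≤ (∏ j, ‖rowE A (t j)‖ ^ 2 / frobSq A) *
            (q * ‖mulE A (rkasSeq A b 0 k t) - mulE A xbar‖ ^ 2) := by
      intro t
      have hsnoc : ∀ i : Fin m, ((Fin.snocEquiv (fun _ : Fin (k+1) => Fin m)) (i, t) : Fin (k+1) → Fin m)
          = (Fin.snoc t i : Fin (k+1) → Fin m) := by intro i; rfl
      have hseq : ∀ i, rkasSeq A b 0 (k+1) ((Fin.snoc t i : Fin (k+1) → Fin m)) = rkasStep A b (rkasSeq A b 0 k t) i := by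
        intro i
        simp only [rkasSeq, Fin.snoc_castSucc, Fin.snoc_last]
      have hprod : ∀ i : Fin m, (∏ j : Fin (k+1), ‖rowE A ((Fin.snoc t i : Fin (k+1) → Fin m) j)‖ ^ 2 / frobSq A)
          = (∏ j, ‖rowE A (t j)‖ ^ 2 / frobSq A) * (‖rowE A i‖ ^ 2 / frobSq A) := by
        intro i
        rw [Fin.prod_univ_castSucc]
        congr 1
        · refine Finset.prod_congr rfl fun j _ => ?_
          rw [Fin.snoc_castSucc]
        · rw [Fin.snoc_last]
      calc ∑ i : Fin m, (∏ j, ‖rowE A ((Fin.snocEquiv (fun _ : Fin (k+1) => Fin m)) (i, t) j)‖ ^ 2 / frobSq A) *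
            ‖mulE A (rkasSeq A b 0 (k+1) ((Fin.snocEquiv (fun _ : Fin (k+1) => Fin m)) (i, t))) - mulE A xbar‖ ^ 2
          = (∏ j, ‖rowE A (t j)‖ ^ 2 / frobSq A) *
              ∑ i : Fin m, (‖rowE A i‖ ^ 2 / frobSq A) *
                ‖mulE A (rkasStep A b (rkasSeq A b 0 k t) i) - mulE A xbar‖ ^ 2 := by
            rw [Finset.mul_sum]
            refine Finset.sum_congr rfl fun i _ => ?_
            rw [hsnoc i, hseq i, hprod i]
            ring
        _ ≤ _ :=
            mul_le_mul_of_nonneg_left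
              (rkas_key_step hrows hm b xbar hxbar_normal σmin hσ_pos hσ_lb nA hnA_pos hnA_ub
                (rkasSeq A b 0 k t) (range_sub (rkasSeq_mem b k t) hxbar_mem))
              (Finset.prod_nonneg fun j _ => by positivity)
    calc ∑ t : Fin k → Fin m, ∑ i : Fin m,
            (∏ j, ‖rowE A ((Fin.snocEquiv (fun _ : Fin (k+1) => Fin m)) (i, t) j)‖ ^ 2 / frobSq A) *
            ‖mulE A (rkasSeq A b 0 (k+1) ((Fin.snocEquiv (fun _ : Fin (k+1) => Fin m)) (i, t))) - mulE A xbar‖ ^ 2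
        ≤ ∑ t : Fin k → Fin m, (∏ j, ‖rowE A (t j)‖ ^ 2 / frobSq A) *
            (q * ‖mulE A (rkasSeq A b 0 k t) - mulE A xbar‖ ^ 2) := by
          exact Finset.sum_le_sum fun t _ => hstep t
      _ = q * ∑ t : Fin k → Fin m, (∏ j, ‖rowE A (t j)‖ ^ 2 / frobSq A) *
            ‖mulE A (rkasSeq A b 0 k t) - mulE A xbar‖ ^ 2 := by
          rw [Finset.mul_sum]
          exact Finset.sum_congr rfl fun t _ => by ring
      _ ≤ q * ((q) ^ k * ‖mulE A 0 - mulE A xbar‖ ^ 2) := by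
          exact mul_le_mul_of_nonneg_left ih hq_nonneg
      _ = q ^ (k+1) * ‖mulE A 0 - mulE A xbar‖ ^ 2 := by ring

end main2
end

section
/- Let A be a real m×n matrix, b ∈ ℝ^m, and x ∈ ℝⁿ. Fix a row index i with A A_{i,:}ᵀ ≠ 0 and define the RKAS update x⁺ = x − α A_{i,:}ᵀ with α = ⟨A A_{i,:}ᵀ, A x − b⟩ / ‖A A_{i,:}ᵀ‖₂². Then ‖A x⁺ − A x̄‖₂² = ‖A x − A x̄‖₂² − ⟨A A_{i,:}ᵀ, A x − A x̄⟩² / ‖A A_{i,:}ᵀ‖₂². -/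
/-!
The normal equations make the residual `b - A x̄` orthogonal to the range of `A`, so with
`u = A x - A x̄` and `v = A A_{i,:}ᵀ` the stepsize is `α = ⟪v, u⟫ / ‖v‖²`. Hence
`A x⁺ - A x̄ = u - α v` is `u` minus its orthogonal projection onto `v`, and the identity is
Pythagoras.
-/

open Matrix
open scoped RealInnerProductSpace

theorem norm_sub_inner_div_smul_sq {F : Type*} [NormedAddCommGroup F] [InnerProductSpace ℝ F]
    (u v : F) :
    ‖u - (⟪v, u⟫ / ‖v‖ ^ 2) • v‖ ^ 2 = ‖u‖ ^ 2 - ⟪v, u⟫ ^ 2 / ‖v‖ ^ 2 := by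
  rw [norm_sub_sq_real, real_inner_smul_right, norm_smul, mul_pow, Real.norm_eq_abs, sq_abs,
    real_inner_comm]
  rcases eq_or_ne ‖v‖ 0 with hv | hv
  · simp [hv]
  · field_simp
    ring

section mulE

variable {m n : ℕ} (A : Matrix (Fin m) (Fin n) ℝ)

theorem inner_mulE_left (y : EuclideanSpace ℝ (Fin n)) (z : EuclideanSpace ℝ (Fin m)) :
    ⟪mulE A y, z⟫ = ⟪y, mulE Aᵀ z⟫ := by
  rw [mulE, mulE, ← conjTranspose_eq_transpose_of_trivial,
    toEuclideanLin_conjTranspose_eq_adjoint, LinearMap.adjoint_inner_right]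

theorem mulE_sub_smul (x y : EuclideanSpace ℝ (Fin n)) (c : ℝ) :
    mulE A (x - c • y) = mulE A x - c • mulE A y := by
  simp only [mulE, map_sub, map_smul]

theorem inner_mulE_sub_eq_of_normal_eq {b : EuclideanSpace ℝ (Fin m)}
    {xbar : EuclideanSpace ℝ (Fin n)} (h : mulE Aᵀ (mulE A xbar) = mulE Aᵀ b)
    (y x : EuclideanSpace ℝ (Fin n)) :
    ⟪mulE A y, mulE A x - b⟫ = ⟪mulE A y, mulE A x - mulE A xbar⟫ := by
  rw [inner_mulE_left, inner_mulE_left]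
  simp only [mulE, map_sub] at h ⊢
  rw [h]

end mulE

theorem rkas_step_residual_identity_general (m n : ℕ) (A : Matrix (Fin m) (Fin n) ℝ)
    (b : EuclideanSpace ℝ (Fin m)) (x : EuclideanSpace ℝ (Fin n))
    -- `x̄ = A†b`: the unique vector in the row space `Range(Aᵀ)` satisfying the
    -- normal equations `Aᵀ A x̄ = Aᵀ b`
    (xbar : EuclideanSpace ℝ (Fin n))
    (hxbar_normal : mulE Aᵀ (mulE A xbar) = mulE Aᵀ b)
    (i : Fin m)
    -- the RKAS stepsize and update
    (α : ℝ) (hα : α = ⟪mulE A (rowE A i), mulE A x - b⟫ / ‖mulE A (rowE A i)‖ ^ 2)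
    (xplus : EuclideanSpace ℝ (Fin n)) (hxplus : xplus = x - α • rowE A i) :
    ‖mulE A xplus - mulE A xbar‖ ^ 2
      = ‖mulE A x - mulE A xbar‖ ^ 2
        - ⟪mulE A (rowE A i), mulE A x - mulE A xbar⟫ ^ 2
          / ‖mulE A (rowE A i)‖ ^ 2 := by
  rw [hxplus, mulE_sub_smul, sub_right_comm, hα, inner_mulE_sub_eq_of_normal_eq A hxbar_normal,
    norm_sub_inner_div_smul_sq]

/-- one RKAS step satisfies the exact residual decrease identity
`‖A x⁺ − A x̄‖² = ‖A x − A x̄‖² − ⟨A A_{i,:}ᵀ, A x − A x̄⟩² / ‖A A_{i,:}ᵀ‖²`. -/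
theorem rkas_step_residual_identity (m n : ℕ) (A : Matrix (Fin m) (Fin n) ℝ)
    (b : EuclideanSpace ℝ (Fin m)) (x : EuclideanSpace ℝ (Fin n))
    -- `x̄ = A†b`: the unique vector in the row space `Range(Aᵀ)` satisfying the
    -- normal equations `Aᵀ A x̄ = Aᵀ b`
    (xbar : EuclideanSpace ℝ (Fin n))
    (hxbar_mem : xbar ∈ Set.range (mulE Aᵀ))
    (hxbar_normal : mulE Aᵀ (mulE A xbar) = mulE Aᵀ b)
    -- a row index `i` with `A A_{i,:}ᵀ ≠ 0`
    (i : Fin m) (hAi : mulE A (rowE A i) ≠ 0)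
    -- the RKAS stepsize and update
    (α : ℝ) (hα : α = ⟪mulE A (rowE A i), mulE A x - b⟫ / ‖mulE A (rowE A i)‖ ^ 2)
    (xplus : EuclideanSpace ℝ (Fin n)) (hxplus : xplus = x - α • rowE A i) :
    ‖mulE A xplus - mulE A xbar‖ ^ 2
      = ‖mulE A x - mulE A xbar‖ ^ 2
        - ⟪mulE A (rowE A i), mulE A x - mulE A xbar⟫ ^ 2
          / ‖mulE A (rowE A i)‖ ^ 2 :=
  rkas_step_residual_identity_general m n A b x xbar hxbar_normal i α hα xplus hxplus
end
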